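/- arXiv:1910.05857 — 2 statements merged into one kernel-verified Lean document; each statement's English description precedes it below -/
import Mathlib

section
/- Let f : ℝ^d → ℝ be differentiable with L-Lipschitz gradient, let α > 0, and let u, y, g ∈ ℝ^d. Set u⁺ := u − αy. Then f(u⁺) ≤ f(u) − (α/2 − α²L/2)‖y‖² + α‖∇f(u) − g‖² + α‖g − y‖². -/
/-! Along the ray `t ↦ x + t • h` the function `f (x + t • h) - t ⟪∇f x, h⟫ - K t² ‖h‖² / 2` has
nonpositive derivative for `t ≥ 0`, by Cauchy–Schwarz and the Lipschitz bound on `∇f`; comparing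
`t = 0` with `t = 1` gives the descent lemma. For the step `h = -α y` it remains to bound
`⟪∇f u, y⟫` from below by `‖y‖² / 2 - ‖∇f u - g‖² - ‖g - y‖²`, which is the polarization identity
followed by the triangle inequality through `g`. -/

open Set
open InnerProductSpace
open scoped NNReal

theorem half_norm_sq_sub_le_real_inner {F : Type*} [NormedAddCommGroup F] [InnerProductSpace ℝ F]
    (a y g : F) : ‖y‖ ^ 2 / 2 - ‖a - g‖ ^ 2 - ‖g - y‖ ^ 2 ≤ ⟪a, y⟫_ℝ := by
  have hpolar : ‖y‖ ^ 2 / 2 - ‖a - y‖ ^ 2 / 2 ≤ ⟪a, y⟫_ℝ := by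
    linarith [norm_sub_sq_real a y, sq_nonneg ‖a‖]
  have hsplit : ‖a - y‖ ^ 2 ≤ 2 * (‖a - g‖ ^ 2 + ‖g - y‖ ^ 2) :=
    (pow_le_pow_left₀ (norm_nonneg _) (norm_sub_le_norm_sub_add_norm_sub a g y) 2).trans
      add_sq_le
  linarith

section Descent

variable {E : Type*} [NormedAddCommGroup E] [InnerProductSpace ℝ E] [CompleteSpace E]

theorem Differentiable.hasDerivAt_comp_add_smul {f : E → ℝ} (hf : Differentiable ℝ f)
    (x h : E) (t : ℝ) :
    HasDerivAt (fun s : ℝ => f (x + s • h)) ⟪gradient f (x + t • h), h⟫_ℝ t := by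
  have hline : HasDerivAt (fun s : ℝ => x + s • h) h t := by
    simpa using ((hasDerivAt_id t).smul_const h).const_add x
  exact (hf _).hasGradientAt.hasFDerivAt.comp_hasDerivAt t hline

theorem LipschitzWith.inner_gradient_sub_le {f : E → ℝ} {K : ℝ≥0}
    (hK : LipschitzWith K (gradient f)) (x h : E) {t : ℝ} (ht : 0 ≤ t) :
    ⟪gradient f (x + t • h) - gradient f x, h⟫_ℝ ≤ K * t * ‖h‖ ^ 2 := by
  calc ⟪gradient f (x + t • h) - gradient f x, h⟫_ℝ
      ≤ ‖gradient f (x + t • h) - gradient f x‖ * ‖h‖ := real_inner_le_norm _ _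
    _ ≤ K * ‖(x + t • h) - x‖ * ‖h‖ := by gcongr; exact hK.norm_sub_le _ _
    _ = K * t * ‖h‖ ^ 2 := by
      rw [add_sub_cancel_left, norm_smul, Real.norm_of_nonneg ht]; ring

theorem descent_lemma {f : E → ℝ} {K : ℝ≥0} (hf : Differentiable ℝ f)
    (hK : LipschitzWith K (gradient f)) (x h : E) :
    f (x + h) ≤ f x + ⟪gradient f x, h⟫_ℝ + K / 2 * ‖h‖ ^ 2 := by
  set φ : ℝ → ℝ := fun t => f (x + t • h) - t * ⟪gradient f x, h⟫_ℝ - K / 2 * t ^ 2 * ‖h‖ ^ 2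
  have hφ : ∀ t, HasDerivAt φ
      (⟪gradient f (x + t • h), h⟫_ℝ - ⟪gradient f x, h⟫_ℝ - K * t * ‖h‖ ^ 2) t := by
    intro t
    have := ((hf.hasDerivAt_comp_add_smul x h t).sub
      ((hasDerivAt_id t).mul_const ⟪gradient f x, h⟫_ℝ)).sub
      (((hasDerivAt_pow 2 t).const_mul ((K : ℝ) / 2)).mul_const (‖h‖ ^ 2))
    exact this.congr_deriv (by simp only [Nat.cast_ofNat]; ring)
  have hanti : AntitoneOn φ (Ici 0) := by
    refine antitoneOn_of_hasDerivWithinAt_nonpos (convex_Ici 0)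
      (fun t _ => (hφ t).continuousAt.continuousWithinAt)
      (fun t _ => (hφ t).hasDerivWithinAt) fun t ht => ?_
    rw [interior_Ici] at ht
    have := hK.inner_gradient_sub_le x h ht.le
    rw [inner_sub_left] at this
    linarith
  have := hanti self_mem_Ici (mem_Ici.2 zero_le_one) zero_le_one
  simp only [φ, zero_smul, add_zero, one_smul, zero_mul, sub_zero, one_mul, one_pow] at this
  linarith

end Descent

/-- descent estimate for one step `u⁺ = u − αy` along an inexact direction `y`,
for `f` differentiable with `L`-Lipschitz gradient:
`f(u⁺) ≤ f(u) − (α/2 − α²L/2)‖y‖² + α‖∇f(u) − g‖² + α‖g − y‖²`. -/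
theorem stmt5 (d : ℕ) (L α : ℝ) (hL : 0 ≤ L) (hα : 0 < α)
    (f : EuclideanSpace ℝ (Fin d) → ℝ)
    (hdiff : Differentiable ℝ f)
    (hlip : ∀ u u' : EuclideanSpace ℝ (Fin d),
      ‖gradient f u - gradient f u'‖ ≤ L * ‖u - u'‖)
    (u y g : EuclideanSpace ℝ (Fin d)) :
    f (u - α • y) ≤
      f u - (α / 2 - α ^ 2 * L / 2) * ‖y‖ ^ 2 + α * ‖gradient f u - g‖ ^ 2 +
        α * ‖g - y‖ ^ 2 := by
  have hK : LipschitzWith L.toNNReal (gradient f) := LipschitzWith.of_dist_le_mul fun a b => by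
    simpa only [dist_eq_norm, Real.coe_toNNReal L hL] using hlip a b
  have hdescent := descent_lemma hdiff hK u (-(α • y))
  rw [Real.coe_toNNReal L hL, ← sub_eq_add_neg, inner_neg_right, real_inner_smul_right, norm_neg,
    norm_smul, Real.norm_of_nonneg hα.le] at hdescent
  have hinner := mul_le_mul_of_nonneg_left
    (half_norm_sq_sub_le_real_inner (gradient f u) y g) hα.le
  linarith
end

section
/- In the decentralized finite-sum setting with the D-GET algorithm, for every iteration r with (n_r − 1)q ≤ r ≤ n_r q − 1 (where n_r = ⌊r/q⌋ + 1), the global gradient-tracking error satisfies E‖ȳ^r − (1/m)∑_{i=1}^m ∇f^i(x_i^r)‖² ≤ (8L²/(m|S₂|))∑_{t=(n_r−1)q}^{r} E‖x^t − 𝟙x̄^t‖² + (4α²L²/(m|S₂|))∑_{t=(n_r−1)q}^{r} E‖y^t − 𝟙ȳ^t‖² + (4α²L²/|S₂|)∑_{t=(n_r−1)q}^{r} E‖ȳ^t‖² + E‖ȳ^{(n_r−1)q} − (1/m)∑_{i=1}^m ∇f^i(x_i^{(n_r−1)q})‖². -/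
/-!
Inside an inner loop the tracking error `e_r = ȳ^r − (1/m) ∑ᵢ ∇fⁱ(xᵢ^r)` changes by
`1/(m |S₂|)` times a sum of `m |S₂|` increments, one for each freshly drawn index. Each increment
is a function of the past and of its own index and has mean zero over that index; as the indices
are independent, all cross terms vanish in expectation, so `E‖e_{r+1}‖² = E‖e_r‖²` plus the
variance of the increments. A sample has variance at most `L² ‖xᵢ^{r+1} − xᵢ^r‖²`, and
`x^{r+1} − x^r = (W − I)(x^r − 𝟙x̄^r) − α y^r` is controlled by `‖(W − I) u‖ ≤ 2 ‖u‖` on consensus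
errors and by `‖y‖² = ‖y − 𝟙ȳ‖² + m ‖ȳ‖²`. Telescoping from the start of the loop gives the bound.
Integrability is free: every iterate is a function of finitely many `Fin n`-valued indices.
-/

open Finset MeasureTheory ProbabilityTheory

noncomputable section

/-- Euclidean space `ℝ^d`. -/
abbrev Vec (d : ℕ) := EuclideanSpace ℝ (Fin d)

/-- Stacked space `(ℝ^d)^m` with the Euclidean (ℓ²) norm. -/
abbrev Stack (m d : ℕ) := PiLp 2 (fun _ : Fin m => Vec d)

/-- Blockwise action of an `m × m` matrix on `(ℝ^d)^m`. -/
def Wact {m d : ℕ} (W : Matrix (Fin m) (Fin m) ℝ) (x : Stack m d) : Stack m d :=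
  WithLp.toLp 2 (fun i => ∑ k, W i k • x k)

/-- Matrix-vector product, valued in Euclidean space. -/
def mulVecE {m : ℕ} (W : Matrix (Fin m) (Fin m) ℝ) (u : Vec m) : Vec m :=
  WithLp.toLp 2 (fun i => ∑ k, W i k * u k)

/-- Block average `x̄ = (1/m) ∑ᵢ xᵢ`. -/
def blockAvg {m d : ℕ} (x : Stack m d) : Vec d := (m : ℝ)⁻¹ • ∑ i, x i

/-- The stacked vector `𝟙 u` all of whose `m` blocks equal `u`. -/
def oneVec {m d : ℕ} (u : Vec d) : Stack m d := WithLp.toLp 2 (fun _ => u)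

/-- Local cost of node `i` in the finite-sum setting: `fᶦ = (1/n) ∑ⱼ fᶦⱼ`. -/
def fLoc {m d n : ℕ} (f : Fin m → Fin n → Vec d → ℝ) (i : Fin m) : Vec d → ℝ :=
  fun w => (n : ℝ)⁻¹ * ∑ j, f i j w

/-- Global cost `f = (1/m) ∑ᵢ fᶦ`. -/
def fTot {m d n : ℕ} (f : Fin m → Fin n → Vec d → ℝ) : Vec d → ℝ :=
  fun w => (m : ℝ)⁻¹ * ∑ i, fLoc f i w

/-- Stacked gradient `G(x) = (∇f¹(x₁),…,∇fᵐ(x_m))`. -/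
def Gmap {m d n : ℕ} (f : Fin m → Fin n → Vec d → ℝ) (x : Stack m d) : Stack m d :=
  WithLp.toLp 2 (fun i => gradient (fLoc f i) (x i))

/-- Network-average gradient `(1/m) ∑ᵢ ∇fᶦ(xᵢ)`. -/
def avgGrad {m d n : ℕ} (f : Fin m → Fin n → Vec d → ℝ) (x : Stack m d) : Vec d :=
  (m : ℝ)⁻¹ • ∑ i, gradient (fLoc f i) (x i)

open RealInnerProductSpace

lemma le_sum_Ico_add_of_succ_le {a c : ℕ → ℝ} {q : ℕ}
    (h : ∀ r, ¬ q ∣ r + 1 → a (r + 1) ≤ a r + c r) (r : ℕ) :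
    a r ≤ ∑ t ∈ Finset.Ico (r / q * q) r, c t + a (r / q * q) := by
  induction r with
  | zero => simp
  | succ r ih =>
    by_cases hq : q ∣ r + 1
    · simp [Nat.div_mul_cancel hq]
    rw [Nat.succ_div, if_neg hq, add_zero, Finset.sum_Ico_succ_top (Nat.div_mul_le_self r q)]
    linarith [h r hq]

section SquareExpansion

variable {E : Type*} [NormedAddCommGroup E] [InnerProductSpace ℝ E] {κ : Type*} [Fintype κ]

lemma sum_norm_add_sq_of_sum_eq_zero (e : E) {z : κ → E} (hz : ∑ j, z j = 0) :
    ∑ j, ‖e + z j‖ ^ 2 = Fintype.card κ * ‖e‖ ^ 2 + ∑ j, ‖z j‖ ^ 2 := by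
  have hcross : ∑ j, 2 * ⟪e, z j⟫ = 0 := by rw [← Finset.mul_sum, ← inner_sum, hz]; simp
  simp only [norm_add_sq_real, Finset.sum_add_distrib, hcross, Finset.sum_const,
    Finset.card_univ, nsmul_eq_mul, add_zero]

lemma sum_norm_sub_mean_sq_le (g : κ → E) :
    ∑ j, ‖g j - (Fintype.card κ : ℝ)⁻¹ • ∑ k, g k‖ ^ 2 ≤ ∑ j, ‖g j‖ ^ 2 := by
  set N : ℝ := (Fintype.card κ : ℝ)
  set c := N⁻¹ • ∑ k, g k
  rcases eq_or_ne N 0 with hN | hN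
  · simp [c, hN]
  have hsum : ∑ k, g k = N • c := by simp only [c, smul_smul, mul_inv_cancel₀ hN, one_smul]
  have hdev := sum_norm_add_sq_of_sum_eq_zero c (z := fun j => g j - c)
    (by simp [Finset.sum_sub_distrib, hsum, N, Nat.cast_smul_eq_nsmul])
  simp only [add_sub_cancel] at hdev
  nlinarith [sq_nonneg ‖c‖, (Nat.cast_nonneg _ : (0 : ℝ) ≤ N)]

end SquareExpansion

section Dependence

variable {Ω ι α β γ : Type*}

def DependsOnlyOn (J : ι → Ω → α) (T : Finset ι) (g : Ω → β) : Prop :=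
  ∃ φ : (T → α) → β, ∀ ω, g ω = φ (fun p => J p ω)

namespace DependsOnlyOn

variable {J : ι → Ω → α} {T T' : Finset ι}

lemma const (b : β) : DependsOnlyOn J T (fun _ => b) := ⟨fun _ => b, fun _ => rfl⟩

lemma apply {p : ι} (hp : p ∈ T) : DependsOnlyOn J T (J p) := ⟨fun c => c ⟨p, hp⟩, fun _ => rfl⟩

lemma mono (hT : T ⊆ T') {g : Ω → β} (h : DependsOnlyOn J T g) : DependsOnlyOn J T' g := by
  obtain ⟨φ, hφ⟩ := h
  exact ⟨fun c => φ (fun p => c ⟨p.1, hT p.2⟩), hφ⟩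

lemma comp {g : Ω → β} (h : DependsOnlyOn J T g) (u : β → γ) :
    DependsOnlyOn J T (fun ω => u (g ω)) := by
  obtain ⟨φ, hφ⟩ := h
  exact ⟨fun c => u (φ c), fun ω => congrArg u (hφ ω)⟩

lemma pi {κ : Type*} {β : κ → Type*} {g : (k : κ) → Ω → β k}
    (h : ∀ k, DependsOnlyOn J T (g k)) : DependsOnlyOn J T (fun ω k => g k ω) := by
  choose φ hφ using h
  exact ⟨fun c k => φ k c, fun ω => funext fun k => hφ k ω⟩

lemma map₂ {g₁ : Ω → β} {g₂ : Ω → γ} {δ : Type*} (u : β → γ → δ)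
    (h₁ : DependsOnlyOn J T g₁) (h₂ : DependsOnlyOn J T g₂) :
    DependsOnlyOn J T (fun ω => u (g₁ ω) (g₂ ω)) := by
  obtain ⟨φ₁, hφ₁⟩ := h₁
  obtain ⟨φ₂, hφ₂⟩ := h₂
  exact ⟨fun c => u (φ₁ c) (φ₂ c), fun ω => congrArg₂ u (hφ₁ ω) (hφ₂ ω)⟩

lemma finset_sum {E κ : Type*} [AddCommMonoid E] {g : κ → Ω → E} (s : Finset κ)
    (hg : ∀ k ∈ s, DependsOnlyOn J T (g k)) :
    DependsOnlyOn J T (fun ω => ∑ k ∈ s, g k ω) := by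
  classical
  induction s using Finset.induction_on with
  | empty => simpa using DependsOnlyOn.const (0 : E)
  | insert a s ha ih =>
    simp only [Finset.sum_insert ha]
    exact (hg a (mem_insert_self a s)).map₂ (· + ·) (ih fun k hk => hg k (mem_insert_of_mem hk))

variable [MeasurableSpace Ω] [MeasurableSpace α] [MeasurableSingletonClass α] [Countable α]

lemma measurable (hJ : ∀ p, Measurable (J p)) [MeasurableSpace β] {g : Ω → β}
    (h : DependsOnlyOn J T g) : Measurable g := by
  obtain ⟨φ, hφ⟩ := h
  rw [funext hφ]
  exact (measurable_of_countable φ).comp (measurable_pi_lambda _ fun p => hJ p.1)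

lemma integrable [Finite α] {μ : Measure Ω} [IsFiniteMeasure μ] (hJ : ∀ p, Measurable (J p))
    {g : Ω → ℝ} (h : DependsOnlyOn J T g) : Integrable g μ := by
  obtain ⟨C, hC⟩ : ∃ C, ∀ ω, ‖g ω‖ ≤ C := by
    obtain ⟨φ, hφ⟩ := h
    obtain ⟨C, hC⟩ := (Set.finite_range fun c => ‖φ c‖).bddAbove
    exact ⟨C, fun ω => hφ ω ▸ hC ⟨_, rfl⟩⟩
  exact .of_bound (h.measurable hJ).aestronglyMeasurable C (ae_of_all _ hC)

end DependsOnlyOn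

end Dependence

section FreshIndex

variable {Ω ι : Type*} [MeasurableSpace Ω] {μ : Measure Ω} [IsProbabilityMeasure μ] {n : ℕ}
  {J : ι → Ω → Fin n}

lemma integral_comp_fresh_index (hJ : ∀ p, Measurable (J p)) (hindep : iIndepFun J μ)
    {p₀ : ι} (hunif : ∀ j, μ {ω | J p₀ ω = j} = (n : ENNReal)⁻¹)
    {T : Finset ι} (hp₀ : p₀ ∉ T) {g : Fin n → Ω → ℝ} (hg : ∀ j, DependsOnlyOn J T (g j)) :
    ∫ ω, g (J p₀ ω) ω ∂μ = (n : ℝ)⁻¹ * ∑ j, ∫ ω, g j ω ∂μ := by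
  set s : Fin n → Set Ω := fun j => {ω | J p₀ ω = j}
  have hs : ∀ j, MeasurableSet (s j) := fun j => hJ p₀ (measurableSet_singleton j)
  have hindepT : IndepFun (J p₀) (fun ω (p : T) => J p ω) μ :=
    (hindep.indepFun_finset {p₀} T (disjoint_singleton_left.2 hp₀) hJ).comp
      (measurable_pi_apply (⟨p₀, mem_singleton_self p₀⟩ : ({p₀} : Finset ι))) measurable_id
  have hsplit : ∀ j,
      ∫ ω, (s j).indicator (1 : Ω → ℝ) ω * g j ω ∂μ = (n : ℝ)⁻¹ * ∫ ω, g j ω ∂μ := by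
    intro j
    obtain ⟨φ, hφ⟩ := hg j
    have hind : IndepFun ((s j).indicator (1 : Ω → ℝ)) (g j) μ := by
      rw [funext hφ]
      exact hindepT.comp (φ := ({j} : Set (Fin n)).indicator (1 : Fin n → ℝ)) (ψ := φ)
        (measurable_of_countable _) (measurable_of_countable _)
    rw [hind.integral_fun_mul_eq_mul_integral
      ((measurable_one.indicator (hs j)).aestronglyMeasurable)
      ((hg j).measurable hJ).aestronglyMeasurable, integral_indicator_one (hs j),
      measureReal_def, hunif, ENNReal.toReal_inv, ENNReal.toReal_natCast]
  have hpt : ∀ ω, g (J p₀ ω) ω = ∑ j, (s j).indicator (1 : Ω → ℝ) ω * g j ω := by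
    intro ω
    rw [Finset.sum_eq_single (J p₀ ω) (fun j _ hj => by simp [s, Ne.symm hj]) (by simp)]
    simp [s]
  rw [integral_congr_ae (ae_of_all _ hpt), integral_finsetSum _ fun j _ =>
    ((hg j).integrable hJ).bdd_mul (c := 1) (measurable_one.indicator (hs j)).aestronglyMeasurable
      (ae_of_all _ fun ω => norm_indicator_le_norm_self _ _ |>.trans (by simp)),
    Finset.mul_sum]
  exact Finset.sum_congr rfl fun j _ => hsplit j

end FreshIndex

section FreshSamples

variable {Ω ι : Type*} [MeasurableSpace Ω] {μ : Measure Ω} [IsProbabilityMeasure μ] {n : ℕ}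
  {J : ι → Ω → Fin n} {E : Type*} [NormedAddCommGroup E] [InnerProductSpace ℝ E]

/-- The cross term averages out over the fresh index because the increment has mean zero. -/
lemma integral_norm_add_fresh_sq (hJ : ∀ p, Measurable (J p)) (hindep : iIndepFun J μ)
    {p₀ : ι} (hunif : ∀ j, μ {ω | J p₀ ω = j} = (n : ENNReal)⁻¹)
    {T : Finset ι} (hp₀ : p₀ ∉ T) {e : Ω → E} (he : DependsOnlyOn J T e)
    {z : Fin n → Ω → E} (hz : ∀ j, DependsOnlyOn J T (z j)) (hsum : ∀ ω, ∑ j, z j ω = 0) :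
    ∫ ω, ‖e ω + z (J p₀ ω) ω‖ ^ 2 ∂μ
      = ∫ ω, ‖e ω‖ ^ 2 ∂μ + (n : ℝ)⁻¹ * ∑ j, ∫ ω, ‖z j ω‖ ^ 2 ∂μ := by
  have hn : (n : ℝ) ≠ 0 := by
    obtain ⟨ω⟩ := nonempty_of_isProbabilityMeasure μ
    exact_mod_cast (J p₀ ω).pos.ne'
  have hint : ∀ {g : Ω → E}, DependsOnlyOn J T g → Integrable (fun ω => ‖g ω‖ ^ 2) μ :=
    fun hg => (hg.comp (‖·‖ ^ 2)).integrable hJ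
  rw [integral_comp_fresh_index hJ hindep hunif hp₀ fun j => (he.map₂ (· + ·) (hz j)).comp
      (‖·‖ ^ 2), ← integral_finsetSum _ fun j _ => hint (he.map₂ (· + ·) (hz j))]
  simp only [sum_norm_add_sq_of_sum_eq_zero _ (hsum _), Fintype.card_fin]
  rw [integral_add ((hint he).const_mul _) (integrable_finsetSum _ fun j _ => hint (hz j)),
    integral_const_mul, integral_finsetSum _ fun j _ => hint (hz j), mul_add,
    inv_mul_cancel_left₀ hn]

lemma integral_norm_add_sum_fresh_sq (hJ : ∀ p, Measurable (J p)) (hindep : iIndepFun J μ)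
    {κ : Type*} {key : κ → ι} (hkey : Function.Injective key)
    (hunif : ∀ k j, μ {ω | J (key k) ω = j} = (n : ENNReal)⁻¹)
    {T : Finset ι} (hfresh : ∀ k, key k ∉ T) {e : Ω → E} (he : DependsOnlyOn J T e)
    {z : κ → Fin n → Ω → E} (hz : ∀ k j, DependsOnlyOn J T (z k j))
    (hsum : ∀ k ω, ∑ j, z k j ω = 0) (s : Finset κ) :
    ∫ ω, ‖e ω + ∑ k ∈ s, z k (J (key k) ω) ω‖ ^ 2 ∂μ
      = ∫ ω, ‖e ω‖ ^ 2 ∂μ + ∑ k ∈ s, (n : ℝ)⁻¹ * ∑ j, ∫ ω, ‖z k j ω‖ ^ 2 ∂μ := by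
  classical
  induction s using Finset.induction_on with
  | empty => simp
  | insert a s ha ih =>
    set T' := T ∪ s.image key
    have hsub : T ⊆ T' := subset_union_left
    have hdep : DependsOnlyOn J T' (fun ω => e ω + ∑ k ∈ s, z k (J (key k) ω) ω) :=
      (he.mono hsub).map₂ (· + ·) <| DependsOnlyOn.finset_sum s fun k hk =>
        (DependsOnlyOn.apply (mem_union_right _ (mem_image_of_mem key hk))).map₂
          (fun j (zk : Fin n → E) => zk j) (DependsOnlyOn.pi fun j => (hz k j).mono hsub)
    have hfresh' : key a ∉ T' := by
      simp only [T', mem_union, mem_image, hkey.eq_iff]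
      exact fun h => h.elim (hfresh a) fun ⟨k, hk, hka⟩ => ha (hka ▸ hk)
    calc ∫ ω, ‖e ω + ∑ k ∈ insert a s, z k (J (key k) ω) ω‖ ^ 2 ∂μ
        = ∫ ω, ‖(e ω + ∑ k ∈ s, z k (J (key k) ω) ω) + z a (J (key a) ω) ω‖ ^ 2 ∂μ := by
          simp only [Finset.sum_insert ha, add_left_comm, add_comm]
      _ = _ := integral_norm_add_fresh_sq hJ hindep (hunif a) hfresh' hdep
          (fun j => (hz a j).mono hsub) (hsum a)
      _ = _ := by rw [ih, Finset.sum_insert ha]; ring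

end FreshSamples

section Stack

variable {m d : ℕ}

lemma blockAvg_add (u v : Stack m d) : blockAvg (u + v) = blockAvg u + blockAvg v := by
  simp [blockAvg, Finset.sum_add_distrib, smul_add]

lemma blockAvg_sub (u v : Stack m d) : blockAvg (u - v) = blockAvg u - blockAvg v := by
  simp [blockAvg, Finset.sum_sub_distrib, smul_sub]

lemma oneVec_apply (c : Vec d) (i : Fin m) : (oneVec c : Stack m d) i = c := rfl

lemma sum_sub_oneVec_blockAvg (u : Stack m d) :
    ∑ i, (u - oneVec (blockAvg u) : Stack m d) i = 0 := by
  rcases Nat.eq_zero_or_pos m with rfl | hm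
  · simp
  simp only [PiLp.sub_apply, oneVec_apply, Finset.sum_sub_distrib, Finset.sum_const,
    Finset.card_univ, Fintype.card_fin, blockAvg, ← Nat.cast_smul_eq_nsmul ℝ, smul_smul,
    mul_inv_cancel₀ (Nat.cast_ne_zero.2 hm.ne' : (m : ℝ) ≠ 0), one_smul, sub_self]

lemma norm_oneVec_sq (c : Vec d) : ‖(oneVec c : Stack m d)‖ ^ 2 = m * ‖c‖ ^ 2 := by
  simp [PiLp.norm_sq_eq_of_L2, oneVec_apply]

lemma norm_sq_eq_norm_sub_oneVec_blockAvg_sq_add (u : Stack m d) :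
    ‖u‖ ^ 2 = ‖u - oneVec (blockAvg u)‖ ^ 2 + m * ‖blockAvg u‖ ^ 2 := by
  have horth : ⟪u - oneVec (blockAvg u), oneVec (blockAvg u)⟫ = 0 := by
    rw [PiLp.inner_apply]
    simp only [oneVec_apply (m := m)]
    rw [← sum_inner, sum_sub_oneVec_blockAvg, inner_zero_left]
  rw [← norm_oneVec_sq, ← add_zero (_ + _), ← mul_zero 2, ← horth, add_right_comm,
    ← norm_add_sq_real, sub_add_cancel]

variable (W : Matrix (Fin m) (Fin m) ℝ)

lemma Wact_sub (a b : Stack m d) : Wact W (a - b) = Wact W a - Wact W b := by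
  ext i : 1
  simp [Wact, smul_sub, Finset.sum_sub_distrib]

variable {W}

lemma sum_row_eq_one (hW1 : W.mulVec (fun _ => (1 : ℝ)) = fun _ => (1 : ℝ)) (i : Fin m) :
    ∑ k, W i k = 1 := by
  simpa [Matrix.mulVec, dotProduct] using congrFun hW1 i

lemma Wact_oneVec (hW1 : W.mulVec (fun _ => (1 : ℝ)) = fun _ => (1 : ℝ)) (c : Vec d) :
    Wact W (oneVec c) = oneVec c := by
  ext i : 1
  simp [Wact, oneVec_apply, ← Finset.sum_smul, sum_row_eq_one hW1]

lemma blockAvg_Wact (hWsymm : W.IsSymm) (hW1 : W.mulVec (fun _ => (1 : ℝ)) = fun _ => (1 : ℝ))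
    (u : Stack m d) : blockAvg (Wact W u) = blockAvg u := by
  have hcol : ∀ k, ∑ i, W i k = 1 := fun k => by
    simpa [← hWsymm.apply k] using sum_row_eq_one hW1 k
  simp only [blockAvg, Wact]
  rw [Finset.sum_comm]
  simp [← Finset.sum_smul, hcol]

end Stack

section Contraction

variable {m d : ℕ}

def coordSlice (z : Stack m d) (s : Fin d) : Vec m := WithLp.toLp 2 fun k => z k s

lemma norm_sq_eq_sum_norm_coordSlice_sq (z : Stack m d) :
    ‖z‖ ^ 2 = ∑ s, ‖coordSlice z s‖ ^ 2 := by
  simp only [PiLp.norm_sq_eq_of_L2, coordSlice, Real.norm_eq_abs, sq_abs]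
  exact Finset.sum_comm

lemma coordSlice_Wact (W : Matrix (Fin m) (Fin m) ℝ) (u : Stack m d) (s : Fin d) :
    coordSlice (Wact W u) s = mulVecE W (coordSlice u s) := by
  ext i
  simp [coordSlice, Wact, mulVecE]

lemma sum_coordSlice {u : Stack m d} (hu : ∑ i, u i = 0) (s : Fin d) :
    ∑ k, coordSlice u s k = 0 := by
  simpa [coordSlice] using congrArg (fun w : Vec d => w s) hu

lemma norm_Wact_le {W : Matrix (Fin m) (Fin m) ℝ} {η : ℝ} (hη0 : 0 ≤ η)
    (hWcontract : ∀ u : Vec m, (∑ k, u k) = 0 → ‖mulVecE W u‖ ≤ η * ‖u‖)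
    {u : Stack m d} (hu : ∑ i, u i = 0) : ‖Wact W u‖ ≤ η * ‖u‖ := by
  refine (pow_le_pow_iff_left₀ (norm_nonneg _) (by positivity) two_ne_zero).1 ?_
  rw [mul_pow, norm_sq_eq_sum_norm_coordSlice_sq, norm_sq_eq_sum_norm_coordSlice_sq,
    Finset.mul_sum]
  gcongr with s
  rw [coordSlice_Wact, ← mul_pow]
  exact pow_le_pow_left₀ (norm_nonneg _) (hWcontract _ (sum_coordSlice hu s)) 2

end Contraction

section Increment

variable {m d : ℕ} {W : Matrix (Fin m) (Fin m) ℝ} {η : ℝ}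

/-- Mixing fixes `𝟙x̄` and moves the consensus error `u` by `‖W u - u‖ ≤ (1 + η) ‖u‖ ≤ 2 ‖u‖`. -/
lemma norm_Wact_sub_smul_sub_sq_le (hη0 : 0 ≤ η) (hη1 : η < 1)
    (hW1 : W.mulVec (fun _ => (1 : ℝ)) = fun _ => (1 : ℝ))
    (hWcontract : ∀ u : Vec m, (∑ k, u k) = 0 → ‖mulVecE W u‖ ≤ η * ‖u‖)
    (α : ℝ) (x y : Stack m d) :
    ‖Wact W x - α • y - x‖ ^ 2 ≤ 8 * ‖x - oneVec (blockAvg x)‖ ^ 2 + 2 * α ^ 2 * ‖y‖ ^ 2 := by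
  set u := x - oneVec (blockAvg x)
  have hdecomp : Wact W x - α • y - x = (Wact W u - u) - α • y := by
    simp only [u, Wact_sub, Wact_oneVec hW1]
    abel
  have hu : ‖Wact W u - u‖ ≤ 2 * ‖u‖ := by
    have := norm_Wact_le hη0 hWcontract (sum_sub_oneVec_blockAvg x)
    linarith [norm_sub_le (Wact W u) u, mul_le_mul_of_nonneg_right hη1.le (norm_nonneg u)]
  have hαy : ‖α • y‖ ^ 2 = α ^ 2 * ‖y‖ ^ 2 := by rw [norm_smul, mul_pow, Real.norm_eq_abs, sq_abs]
  rw [hdecomp]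
  nlinarith [norm_sub_le (Wact W u - u) (α • y), norm_nonneg (Wact W u - u - α • y),
    norm_nonneg (Wact W u - u), norm_nonneg (α • y), sq_nonneg (‖Wact W u - u‖ - ‖α • y‖)]

end Increment

section SampledGradients

variable {m d n : ℕ} {f : Fin m → Fin n → Vec d → ℝ} {i : Fin m}

lemma gradient_fLoc (hdiff : ∀ j, Differentiable ℝ (f i j)) (w : Vec d) :
    gradient (fLoc f i) w = (n : ℝ)⁻¹ • ∑ j, gradient (f i j) w := by
  have hsum : HasFDerivAt (fun w => ∑ j, f i j w) (∑ j, fderiv ℝ (f i j) w) w :=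
    HasFDerivAt.fun_sum fun j _ => (hdiff j w).hasFDerivAt
  rw [gradient, show fderiv ℝ (fLoc f i) w = (n : ℝ)⁻¹ • ∑ j, fderiv ℝ (f i j) w from
    (hsum.const_mul _).fderiv, _root_.map_smul, _root_.map_sum]
  rfl

def gradDiffDeviation (f : Fin m → Fin n → Vec d → ℝ) (i : Fin m) (j : Fin n) (a a' : Vec d) :
    Vec d :=
  (gradient (f i j) a - gradient (f i j) a') - (gradient (fLoc f i) a - gradient (fLoc f i) a')

lemma gradDiffDeviation_eq (hdiff : ∀ j, Differentiable ℝ (f i j)) (j : Fin n) (a a' : Vec d) :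
    gradDiffDeviation f i j a a' = (gradient (f i j) a - gradient (f i j) a')
      - (n : ℝ)⁻¹ • ∑ k, (gradient (f i k) a - gradient (f i k) a') := by
  rw [gradDiffDeviation, gradient_fLoc hdiff, gradient_fLoc hdiff, Finset.sum_sub_distrib,
    smul_sub]

lemma sum_gradDiffDeviation (hdiff : ∀ j, Differentiable ℝ (f i j)) (a a' : Vec d) :
    ∑ j, gradDiffDeviation f i j a a' = 0 := by
  rcases Nat.eq_zero_or_pos n with rfl | hn
  · simp
  simp only [gradDiffDeviation_eq hdiff, Finset.sum_sub_distrib, Finset.sum_const,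
    Finset.card_univ, Fintype.card_fin, ← Nat.cast_smul_eq_nsmul ℝ, smul_smul,
    mul_inv_cancel₀ (Nat.cast_ne_zero.2 hn.ne' : (n : ℝ) ≠ 0), one_smul, sub_self]

lemma sum_norm_gradDiffDeviation_sq_le (hdiff : ∀ j, Differentiable ℝ (f i j)) {L : ℝ}
    (hlip : ∀ j (u u' : Vec d), ‖gradient (f i j) u - gradient (f i j) u'‖ ≤ L * ‖u - u'‖)
    (a a' : Vec d) :
    ∑ j, ‖gradDiffDeviation f i j a a'‖ ^ 2 ≤ n * (L ^ 2 * ‖a - a'‖ ^ 2) := by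
  simp only [gradDiffDeviation_eq hdiff]
  calc _ ≤ ∑ j, ‖gradient (f i j) a - gradient (f i j) a'‖ ^ 2 := by
        simpa using sum_norm_sub_mean_sq_le fun j => gradient (f i j) a - gradient (f i j) a'
    _ ≤ ∑ _j : Fin n, (L * ‖a - a'‖) ^ 2 := by
        gcongr with j
        exact hlip j a a'
    _ = _ := by simp [mul_pow]

end SampledGradients

section TrackingError

variable {m d n S2 : ℕ} {f : Fin m → Fin n → Vec d → ℝ} {W : Matrix (Fin m) (Fin m) ℝ}

/-- Mixing preserves block averages, so only the fresh mini-batches move the tracking error. -/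
lemma blockAvg_sub_avgGrad_step (hS2 : S2 ≠ 0) (hWsymm : W.IsSymm)
    (hW1 : W.mulVec (fun _ => (1 : ℝ)) = fun _ => (1 : ℝ)) (jj : Fin S2 → Fin m → Fin n)
    {x x' y v v' : Stack m d}
    (hv' : ∀ i, v' i = (S2 : ℝ)⁻¹ • ∑ b, (gradient (f i (jj b i)) (x' i)
      - gradient (f i (jj b i)) (x i)) + v i) :
    blockAvg (Wact W y + v' - v) - avgGrad f x'
      = (blockAvg y - avgGrad f x) + ∑ p : Fin S2 × Fin m,
          ((m : ℝ)⁻¹ * (S2 : ℝ)⁻¹) • gradDiffDeviation f p.2 (jj p.1 p.2) (x' p.2) (x p.2) := by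
  have hnode : ∀ i, (S2 : ℝ)⁻¹ • ∑ b, gradDiffDeviation f i (jj b i) (x' i) (x i)
      = (v' i - v i) - (gradient (fLoc f i) (x' i) - gradient (fLoc f i) (x i)) := by
    intro i
    simp only [gradDiffDeviation, Finset.sum_sub_distrib, Finset.sum_const, Finset.card_univ,
      Fintype.card_fin, smul_sub, ← Nat.cast_smul_eq_nsmul ℝ, smul_smul,
      inv_mul_cancel₀ (Nat.cast_ne_zero.2 hS2 : (S2 : ℝ) ≠ 0), one_smul, hv' i]
    abel
  rw [← Finset.smul_sum, Fintype.sum_prod_type_right, ← smul_smul,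
    Finset.smul_sum (r := (S2 : ℝ)⁻¹)]
  simp only [hnode, blockAvg_sub, blockAvg_add, blockAvg_Wact hWsymm hW1]
  simp only [blockAvg, avgGrad, Finset.sum_sub_distrib, smul_sub]
  abel

end TrackingError

section EstimatorVariance

variable {m d n S2 : ℕ} {f : Fin m → Fin n → Vec d → ℝ} {L : ℝ}

lemma sum_norm_smul_gradDiffDeviation_sq_le (hdiff : ∀ i j, Differentiable ℝ (f i j))
    (hlip : ∀ i j (u u' : Vec d), ‖gradient (f i j) u - gradient (f i j) u'‖ ≤ L * ‖u - u'‖)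
    (c : ℝ) (x x' : Stack m d) :
    ∑ p : Fin S2 × Fin m, (n : ℝ)⁻¹ * ∑ j, ‖c • gradDiffDeviation f p.2 j (x' p.2) (x p.2)‖ ^ 2
      ≤ c ^ 2 * S2 * (L ^ 2 * ‖x' - x‖ ^ 2) := by
  have hnode : ∀ i, (n : ℝ)⁻¹ * ∑ j, ‖c • gradDiffDeviation f i j (x' i) (x i)‖ ^ 2
      ≤ c ^ 2 * (L ^ 2 * ‖x' i - x i‖ ^ 2) := by
    intro i
    simp only [norm_smul, mul_pow, Real.norm_eq_abs, sq_abs, ← Finset.mul_sum]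
    rw [mul_left_comm]
    refine mul_le_mul_of_nonneg_left ?_ (sq_nonneg c)
    rcases Nat.eq_zero_or_pos n with rfl | hn
    · simp only [CharP.cast_eq_zero, inv_zero, zero_mul]; positivity
    rw [inv_mul_le_iff₀ (by positivity)]
    exact sum_norm_gradDiffDeviation_sq_le (hdiff i) (hlip i) _ _
  calc _ ≤ ∑ p : Fin S2 × Fin m, c ^ 2 * (L ^ 2 * ‖x' p.2 - x p.2‖ ^ 2) :=
        Finset.sum_le_sum fun p _ => hnode p.2
    _ = _ := by
      simp only [Fintype.sum_prod_type, Finset.sum_const, Finset.card_univ, Fintype.card_fin,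
        nsmul_eq_mul, ← Finset.mul_sum, PiLp.norm_sq_eq_of_L2, PiLp.sub_apply]
      ring

variable {W : Matrix (Fin m) (Fin m) ℝ} {η : ℝ}

lemma coeff_mul_norm_Wact_sub_smul_sub_sq_le (hS2 : S2 ≠ 0) (hη0 : 0 ≤ η) (hη1 : η < 1)
    (hW1 : W.mulVec (fun _ => (1 : ℝ)) = fun _ => (1 : ℝ))
    (hWcontract : ∀ u : Vec m, (∑ k, u k) = 0 → ‖mulVecE W u‖ ≤ η * ‖u‖)
    (L α : ℝ) (x y : Stack m d) :
    ((m : ℝ)⁻¹ * (S2 : ℝ)⁻¹) ^ 2 * S2 * (L ^ 2 * ‖Wact W x - α • y - x‖ ^ 2)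
      ≤ 8 * L ^ 2 / ((m : ℝ) * S2) * ‖x - oneVec (blockAvg x)‖ ^ 2
        + 4 * α ^ 2 * L ^ 2 / ((m : ℝ) * S2) * ‖y - oneVec (blockAvg y)‖ ^ 2
        + 4 * α ^ 2 * L ^ 2 / (S2 : ℝ) * ‖blockAvg y‖ ^ 2 := by
  have hΔ := norm_Wact_sub_smul_sub_sq_le hη0 hη1 hW1 hWcontract α x y
  rw [norm_sq_eq_norm_sub_oneVec_blockAvg_sq_add y] at hΔ
  set a : ℝ := (m : ℝ)⁻¹
  set s : ℝ := (S2 : ℝ)⁻¹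
  have hs : s * S2 = 1 := inv_mul_cancel₀ (Nat.cast_ne_zero.2 hS2)
  have ha1 : a ≤ 1 := Nat.cast_inv_le_one m
  have ham : a * m ≤ 1 := by
    rcases Nat.eq_zero_or_pos m with rfl | hm
    · simp
    · exact (inv_mul_cancel₀ (Nat.cast_ne_zero.2 hm.ne')).le
  have hcoef : ∀ c : ℝ, c / ((m : ℝ) * S2) = c * a * s := fun c => by
    rw [div_eq_mul_inv, mul_inv, mul_assoc]
  rw [hcoef, hcoef, div_eq_mul_inv]
  have hK : (a * s) ^ 2 * S2 = a ^ 2 * s := by linear_combination a ^ 2 * s * hs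
  rw [hK]
  have ha0 : 0 ≤ a := by positivity
  have hs0 : 0 ≤ s := by positivity
  have haam : a * (a * m) ≤ 1 := by nlinarith [mul_nonneg ha0 (Nat.cast_nonneg (α := ℝ) m)]
  have h1 := mul_le_mul_of_nonneg_left hΔ (by positivity : 0 ≤ a ^ 2 * s * L ^ 2)
  have h2 : 0 ≤ (1 - a) * (a * s * L ^ 2 * ‖x - oneVec (blockAvg x)‖ ^ 2) :=
    mul_nonneg (by linarith) (by positivity)
  have h3 : 0 ≤ (2 - a) * (a * s * L ^ 2 * α ^ 2 * ‖y - oneVec (blockAvg y)‖ ^ 2) :=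
    mul_nonneg (by linarith) (by positivity)
  have h4 : 0 ≤ (2 - a * (a * m)) * (s * L ^ 2 * α ^ 2 * ‖blockAvg y‖ ^ 2) :=
    mul_nonneg (by linarith) (by positivity)
  linear_combination h1 + 8 * h2 + 2 * h3 + 2 * h4

end EstimatorVariance

section DGET

variable {m d n S2 : ℕ} {Ω : Type*}

def samples (J : ℕ → Fin S2 → Fin m → Ω → Fin n) : ℕ × Fin S2 × Fin m → Ω → Fin n :=
  fun p => J p.1 p.2.1 p.2.2

def samplesUpTo (t : ℕ) : Finset (ℕ × Fin S2 × Fin m) := Finset.Iic t ×ˢ Finset.univ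

lemma mem_samplesUpTo {t : ℕ} {p : ℕ × Fin S2 × Fin m} : p ∈ samplesUpTo t ↔ p.1 ≤ t := by
  simp [samplesUpTo]

lemma samplesUpTo_mono {t t' : ℕ} (h : t ≤ t') :
    (samplesUpTo t : Finset (ℕ × Fin S2 × Fin m)) ⊆ samplesUpTo t' :=
  fun _ hp => mem_samplesUpTo.2 ((mem_samplesUpTo.1 hp).trans h)

variable {q : ℕ} {α : ℝ} {f : Fin m → Fin n → Vec d → ℝ} {W : Matrix (Fin m) (Fin m) ℝ}
  {J : ℕ → Fin S2 → Fin m → Ω → Fin n} {x v y : ℕ → Ω → Stack m d}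

lemma dependsOnlyOn_samplesUpTo {x0 : Stack m d}
    (hx0 : ∀ ω, x 0 ω = x0)
    (hy0 : ∀ ω, y 0 ω = v 0 ω)
    (hxrec : ∀ r ω, x (r + 1) ω = Wact W (x r ω) - α • y r ω)
    (hvfull : ∀ r, q ∣ r → ∀ ω, v r ω = Gmap f (x r ω))
    (hvest : ∀ r, ¬ q ∣ (r + 1) → ∀ ω i, v (r + 1) ω i =
      (S2 : ℝ)⁻¹ • ∑ b, (gradient (f i (J (r + 1) b i ω)) (x (r + 1) ω i)
        - gradient (f i (J (r + 1) b i ω)) (x r ω i)) + v r ω i)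
    (hyrec : ∀ r ω, y (r + 1) ω = Wact W (y r ω) + v (r + 1) ω - v r ω) (t : ℕ) :
    DependsOnlyOn (samples J) (samplesUpTo t) (x t)
      ∧ DependsOnlyOn (samples J) (samplesUpTo t) (v t)
      ∧ DependsOnlyOn (samples J) (samplesUpTo t) (y t) := by
  induction t with
  | zero =>
    have hx : DependsOnlyOn (samples J) (samplesUpTo 0) (x 0) := by
      rw [funext hx0]; exact .const x0
    have hv : DependsOnlyOn (samples J) (samplesUpTo 0) (v 0) := by
      rw [funext (hvfull 0 (dvd_zero q))]; exact hx.comp (Gmap f)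
    exact ⟨hx, hv, by rw [funext hy0]; exact hv⟩
  | succ t ih =>
    have hsub := samplesUpTo_mono (S2 := S2) (m := m) t.le_succ
    obtain ⟨hx, hv, hy⟩ := ih
    replace hx := hx.mono hsub
    replace hv := hv.mono hsub
    replace hy := hy.mono hsub
    have hx' : DependsOnlyOn (samples J) (samplesUpTo (t + 1)) (x (t + 1)) := by
      rw [funext (hxrec t)]; exact hx.map₂ (fun a b => Wact W a - α • b) hy
    have hv' : DependsOnlyOn (samples J) (samplesUpTo (t + 1)) (v (t + 1)) := by
      by_cases hq : q ∣ t + 1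
      · rw [funext (hvfull _ hq)]; exact hx'.comp (Gmap f)
      have hJ : DependsOnlyOn (samples J) (samplesUpTo (t + 1))
          (fun ω (k : Fin S2 × Fin m) => J (t + 1) k.1 k.2 ω) :=
        DependsOnlyOn.pi fun k => DependsOnlyOn.apply (p := (t + 1, k)) (mem_samplesUpTo.2 le_rfl)
      have hupd := (hx'.map₂ Prod.mk (hx.map₂ Prod.mk hv)).map₂ (fun P jj =>
        (WithLp.toLp 2 fun i => (S2 : ℝ)⁻¹ • ∑ b, (gradient (f i (jj (b, i))) (P.1 i)
          - gradient (f i (jj (b, i))) (P.2.1 i)) + P.2.2 i : Stack m d)) hJ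
      convert hupd using 2 with ω
      ext i : 1
      exact hvest t hq ω i
    refine ⟨hx', hv', ?_⟩
    rw [funext (hyrec t)]; exact (hy.map₂ (fun a b => Wact W a + b) hv').map₂ (· - ·) hv

variable {L η : ℝ} [MeasurableSpace Ω] {μ : Measure Ω} [IsProbabilityMeasure μ]

lemma sum_integral_norm_smul_gradDiffDeviation_sq_le (hS2 : S2 ≠ 0) (hη0 : 0 ≤ η) (hη1 : η < 1)
    (hdiff : ∀ i j, Differentiable ℝ (f i j))
    (hlip : ∀ i j (u u' : Vec d),
      ‖gradient (f i j) u - gradient (f i j) u'‖ ≤ L * ‖u - u'‖)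
    (hW1 : W.mulVec (fun _ => (1 : ℝ)) = fun _ => (1 : ℝ))
    (hWcontract : ∀ u : Vec m, (∑ k, u k) = 0 → ‖mulVecE W u‖ ≤ η * ‖u‖)
    {ι : Type*} {I : ι → Ω → Fin n} (hI : ∀ p, Measurable (I p)) {T : Finset ι}
    {X Y : Ω → Stack m d} (hX : DependsOnlyOn I T X) (hY : DependsOnlyOn I T Y) :
    ∑ k : Fin S2 × Fin m, (n : ℝ)⁻¹ * ∑ j, ∫ ω, ‖((m : ℝ)⁻¹ * (S2 : ℝ)⁻¹) •
        gradDiffDeviation f k.2 j ((Wact W (X ω) - α • Y ω) k.2) (X ω k.2)‖ ^ 2 ∂μ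
      ≤ 8 * L ^ 2 / ((m : ℝ) * S2) * ∫ ω, ‖X ω - oneVec (blockAvg (X ω))‖ ^ 2 ∂μ
        + 4 * α ^ 2 * L ^ 2 / ((m : ℝ) * S2) * ∫ ω, ‖Y ω - oneVec (blockAvg (Y ω))‖ ^ 2 ∂μ
        + 4 * α ^ 2 * L ^ 2 / (S2 : ℝ) * ∫ ω, ‖blockAvg (Y ω)‖ ^ 2 ∂μ := by
  have hint : ∀ {g : Ω → ℝ}, DependsOnlyOn I T g → Integrable g μ := fun hg => hg.integrable hI
  have hdev : ∀ (k : Fin S2 × Fin m) (j : Fin n), Integrable (fun ω =>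
      ‖((m : ℝ)⁻¹ * (S2 : ℝ)⁻¹) •
        gradDiffDeviation f k.2 j ((Wact W (X ω) - α • Y ω) k.2) (X ω k.2)‖ ^ 2) μ :=
    fun k j => hint <| hX.map₂ (fun a b : Stack m d => ‖((m : ℝ)⁻¹ * (S2 : ℝ)⁻¹) •
      gradDiffDeviation f k.2 j ((Wact W a - α • b) k.2) (a k.2)‖ ^ 2) hY
  have hvar := integrable_finsetSum Finset.univ fun k _ =>
    (integrable_finsetSum Finset.univ fun j _ => hdev k j).const_mul (n : ℝ)⁻¹
  have hA := (hint (hX.comp fun a => ‖a - oneVec (blockAvg a)‖ ^ 2)).const_mul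
    (8 * L ^ 2 / ((m : ℝ) * S2))
  have hB := (hint (hY.comp fun a => ‖a - oneVec (blockAvg a)‖ ^ 2)).const_mul
    (4 * α ^ 2 * L ^ 2 / ((m : ℝ) * S2))
  have hC := (hint (hY.comp fun a => ‖blockAvg a‖ ^ 2)).const_mul (4 * α ^ 2 * L ^ 2 / (S2 : ℝ))
  simp only [← integral_const_mul, ← integral_finsetSum _ fun j _ => hdev _ j]
  have hAB : Integrable (fun ω => 8 * L ^ 2 / ((m : ℝ) * S2) * ‖X ω - oneVec (blockAvg (X ω))‖ ^ 2
      + 4 * α ^ 2 * L ^ 2 / ((m : ℝ) * S2) * ‖Y ω - oneVec (blockAvg (Y ω))‖ ^ 2) μ := hA.add hB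
  rw [← integral_finsetSum _ fun k _ => (integrable_finsetSum _ fun j _ => hdev k j).const_mul _,
    ← integral_add hA hB, ← integral_add hAB hC]
  refine integral_mono hvar (hAB.add hC) fun ω => ?_
  exact (sum_norm_smul_gradDiffDeviation_sq_le hdiff hlip _ (X ω) _).trans
    (coeff_mul_norm_Wact_sub_smul_sub_sq_le hS2 hη0 hη1 hW1 hWcontract L α _ _)

lemma integral_norm_blockAvg_sub_avgGrad_succ_le (hS2 : S2 ≠ 0) (hη0 : 0 ≤ η) (hη1 : η < 1)
    (hdiff : ∀ i j, Differentiable ℝ (f i j))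
    (hlip : ∀ i j (u u' : Vec d),
      ‖gradient (f i j) u - gradient (f i j) u'‖ ≤ L * ‖u - u'‖)
    (hWsymm : W.IsSymm) (hW1 : W.mulVec (fun _ => (1 : ℝ)) = fun _ => (1 : ℝ))
    (hWcontract : ∀ u : Vec m, (∑ k, u k) = 0 → ‖mulVecE W u‖ ≤ η * ‖u‖)
    (hJmeas : ∀ r b i, Measurable (J r b i))
    (hJunif : ∀ r b i j, μ {ω | J r b i ω = j} = (n : ENNReal)⁻¹)
    (hJindep : iIndepFun (samples J) μ) {r : ℕ}
    (hx : DependsOnlyOn (samples J) (samplesUpTo r) (x r))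
    (hy : DependsOnlyOn (samples J) (samplesUpTo r) (y r))
    (hxrec : ∀ ω, x (r + 1) ω = Wact W (x r ω) - α • y r ω)
    (hvest : ∀ ω i, v (r + 1) ω i =
      (S2 : ℝ)⁻¹ • ∑ b, (gradient (f i (J (r + 1) b i ω)) (x (r + 1) ω i)
        - gradient (f i (J (r + 1) b i ω)) (x r ω i)) + v r ω i)
    (hyrec : ∀ ω, y (r + 1) ω = Wact W (y r ω) + v (r + 1) ω - v r ω) :
    ∫ ω, ‖blockAvg (y (r + 1) ω) - avgGrad f (x (r + 1) ω)‖ ^ 2 ∂μ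
      ≤ ∫ ω, ‖blockAvg (y r ω) - avgGrad f (x r ω)‖ ^ 2 ∂μ
        + (8 * L ^ 2 / ((m : ℝ) * S2) * ∫ ω, ‖x r ω - oneVec (blockAvg (x r ω))‖ ^ 2 ∂μ
          + 4 * α ^ 2 * L ^ 2 / ((m : ℝ) * S2) * ∫ ω, ‖y r ω - oneVec (blockAvg (y r ω))‖ ^ 2 ∂μ
          + 4 * α ^ 2 * L ^ 2 / (S2 : ℝ) * ∫ ω, ‖blockAvg (y r ω)‖ ^ 2 ∂μ) := by
  have hmeas : ∀ p, Measurable (samples J p) := fun p => hJmeas _ _ _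
  let z : Fin S2 × Fin m → Fin n → Ω → Vec d := fun k j ω => ((m : ℝ)⁻¹ * (S2 : ℝ)⁻¹) •
    gradDiffDeviation f k.2 j ((Wact W (x r ω) - α • y r ω) k.2) (x r ω k.2)
  have hz : ∀ k j, DependsOnlyOn (samples J) (samplesUpTo r) (z k j) := fun k j =>
    hx.map₂ (fun a b : Stack m d => ((m : ℝ)⁻¹ * (S2 : ℝ)⁻¹) •
      gradDiffDeviation f k.2 j ((Wact W a - α • b) k.2) (a k.2)) hy
  have herr : ∀ ω, blockAvg (y (r + 1) ω) - avgGrad f (x (r + 1) ω)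
      = (blockAvg (y r ω) - avgGrad f (x r ω)) + ∑ k, z k (samples J (r + 1, k) ω) ω := by
    intro ω
    simp only [z, hyrec, ← hxrec]
    exact blockAvg_sub_avgGrad_step hS2 hWsymm hW1 (fun b i => J (r + 1) b i ω) (hvest ω)
  simp only [herr]
  rw [integral_norm_add_sum_fresh_sq hmeas hJindep (key := fun k => (r + 1, k))
    (fun k k' h => (Prod.ext_iff.1 h).2) (fun k j => hJunif _ _ _ j)
    (fun k h => by simpa using mem_samplesUpTo.1 h)
    (hy.map₂ (fun a b : Stack m d => blockAvg a - avgGrad f b) hx) hz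
    (fun k ω => by simp only [z, ← Finset.smul_sum, sum_gradDiffDeviation (hdiff k.2), smul_zero])]
  gcongr
  exact sum_integral_norm_smul_gradDiffDeviation_sq_le hS2 hη0 hη1 hdiff hlip hW1 hWcontract
    hmeas hx hy

end DGET

/-- `r / q * q` is the paper's `(n_r − 1) q`, the start of the inner loop containing `r`. -/
theorem stmt8_general
    (m d n q S2 : ℕ) (hS2 : 0 < S2)
    (L η α : ℝ) (hη0 : 0 ≤ η) (hη1 : η < 1)
    (f : Fin m → Fin n → Vec d → ℝ)
    (hdiff : ∀ i j, Differentiable ℝ (f i j))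
    (hlip : ∀ i j (u u' : Vec d),
      ‖gradient (f i j) u - gradient (f i j) u'‖ ≤ L * ‖u - u'‖)
    (W : Matrix (Fin m) (Fin m) ℝ) (hWsymm : W.IsSymm)
    (hW1 : W.mulVec (fun _ => (1 : ℝ)) = fun _ => (1 : ℝ))
    (hWcontract : ∀ u : Vec m, (∑ k, u k) = 0 → ‖mulVecE W u‖ ≤ η * ‖u‖)
    (Ω : Type) [MeasurableSpace Ω] (μ : Measure Ω) [IsProbabilityMeasure μ]
    (J : ℕ → Fin S2 → Fin m → Ω → Fin n)
    (hJmeas : ∀ r b i, Measurable (J r b i))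
    (hJunif : ∀ r b i j, μ {ω | J r b i ω = j} = (n : ENNReal)⁻¹)
    (hJindep : iIndepFun
      (fun p : ℕ × Fin S2 × Fin m => J p.1 p.2.1 p.2.2) μ)
    (x0 : Stack m d) (x v y : ℕ → Ω → Stack m d)
    (hx0 : ∀ ω, x 0 ω = x0)
    (hy0 : ∀ ω, y 0 ω = v 0 ω)
    (hxrec : ∀ r ω, x (r + 1) ω = Wact W (x r ω) - α • y r ω)
    (hvfull : ∀ r, q ∣ r → ∀ ω, v r ω = Gmap f (x r ω))
    (hvest : ∀ r, ¬ q ∣ (r + 1) → ∀ ω i, v (r + 1) ω i =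
      (S2 : ℝ)⁻¹ • ∑ b, (gradient (f i (J (r + 1) b i ω)) (x (r + 1) ω i)
        - gradient (f i (J (r + 1) b i ω)) (x r ω i)) + v r ω i)
    (hyrec : ∀ r ω, y (r + 1) ω = Wact W (y r ω) + v (r + 1) ω - v r ω)
    :
    ∀ r : ℕ,
      (∫ ω, ‖blockAvg (y r ω) - avgGrad f (x r ω)‖ ^ 2 ∂μ) ≤
        8 * L ^ 2 / ((m : ℝ) * S2) *
            ∑ t ∈ Finset.Icc (r / q * q) r, ∫ ω, ‖x t ω - oneVec (blockAvg (x t ω))‖ ^ 2 ∂μ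
        + 4 * α ^ 2 * L ^ 2 / ((m : ℝ) * S2) *
            ∑ t ∈ Finset.Icc (r / q * q) r, ∫ ω, ‖y t ω - oneVec (blockAvg (y t ω))‖ ^ 2 ∂μ
        + 4 * α ^ 2 * L ^ 2 / (S2 : ℝ) *
            ∑ t ∈ Finset.Icc (r / q * q) r, ∫ ω, ‖blockAvg (y t ω)‖ ^ 2 ∂μ
        + ∫ ω, ‖blockAvg (y (r / q * q) ω) - avgGrad f (x (r / q * q) ω)‖ ^ 2 ∂μ := by
  have hist := dependsOnlyOn_samplesUpTo hx0 hy0 hxrec hvfull hvest hyrec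
  intro r
  have hstep : ∀ t, ¬ q ∣ t + 1 → _ := fun t ht =>
    integral_norm_blockAvg_sub_avgGrad_succ_le hS2.ne' hη0 hη1 hdiff hlip hWsymm hW1 hWcontract
      hJmeas hJunif hJindep (hist t).1 (hist t).2.2 (hxrec t) (hvest t ht) (hyrec t)
  refine (le_sum_Ico_add_of_succ_le
    (a := fun t => ∫ ω, ‖blockAvg (y t ω) - avgGrad f (x t ω)‖ ^ 2 ∂μ) hstep r).trans ?_
  simp only [Finset.mul_sum, ← Finset.sum_add_distrib]
  gcongr ?_ + _
  exact Finset.sum_le_sum_of_subset_of_nonneg Finset.Ico_subset_Icc_self fun t _ _ => by positivity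

/-- Lemma 1, part 1: bound on the global gradient-tracking variance over the
current inner loop.  Here `n_r = ⌊r/q⌋ + 1`, so `(n_r − 1)q = (r/q)·q`, and every iteration
`r` satisfies `(n_r − 1)q ≤ r ≤ n_r q − 1`. -/
theorem stmt8
    (m d n q S2 : ℕ) (hm : 0 < m) (hn : 0 < n) (hq : 1 ≤ q) (hS2 : 0 < S2)
    (L η α : ℝ) (hL : 0 ≤ L) (hη0 : 0 ≤ η) (hη1 : η < 1) (hα : 0 < α)
    (f : Fin m → Fin n → Vec d → ℝ)
    (hdiff : ∀ i j, Differentiable ℝ (f i j))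
    (hlip : ∀ i j (u u' : Vec d),
      ‖gradient (f i j) u - gradient (f i j) u'‖ ≤ L * ‖u - u'‖)
    (W : Matrix (Fin m) (Fin m) ℝ) (hWsymm : W.IsSymm)
    (hW1 : W.mulVec (fun _ => (1 : ℝ)) = fun _ => (1 : ℝ))
    (hWcontract : ∀ u : Vec m, (∑ k, u k) = 0 → ‖mulVecE W u‖ ≤ η * ‖u‖)
    (Ω : Type) [MeasurableSpace Ω] (μ : Measure Ω) [IsProbabilityMeasure μ]
    (J : ℕ → Fin S2 → Fin m → Ω → Fin n)
    (hJmeas : ∀ r b i, Measurable (J r b i))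
    (hJunif : ∀ r b i j, μ {ω | J r b i ω = j} = (n : ENNReal)⁻¹)
    (hJindep : iIndepFun
      (fun p : ℕ × Fin S2 × Fin m => J p.1 p.2.1 p.2.2) μ)
    (x0 : Stack m d) (x v y : ℕ → Ω → Stack m d)
    (hx0 : ∀ ω, x 0 ω = x0)
    (hy0 : ∀ ω, y 0 ω = v 0 ω)
    (hxrec : ∀ r ω, x (r + 1) ω = Wact W (x r ω) - α • y r ω)
    (hvfull : ∀ r, q ∣ r → ∀ ω, v r ω = Gmap f (x r ω))
    (hvest : ∀ r, ¬ q ∣ (r + 1) → ∀ ω i, v (r + 1) ω i =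
      (S2 : ℝ)⁻¹ • ∑ b, (gradient (f i (J (r + 1) b i ω)) (x (r + 1) ω i)
        - gradient (f i (J (r + 1) b i ω)) (x r ω i)) + v r ω i)
    (hyrec : ∀ r ω, y (r + 1) ω = Wact W (y r ω) + v (r + 1) ω - v r ω)
    :
    ∀ r : ℕ,
      (∫ ω, ‖blockAvg (y r ω) - avgGrad f (x r ω)‖ ^ 2 ∂μ) ≤
        8 * L ^ 2 / ((m : ℝ) * S2) *
            ∑ t ∈ Finset.Icc (r / q * q) r, ∫ ω, ‖x t ω - oneVec (blockAvg (x t ω))‖ ^ 2 ∂μ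
        + 4 * α ^ 2 * L ^ 2 / ((m : ℝ) * S2) *
            ∑ t ∈ Finset.Icc (r / q * q) r, ∫ ω, ‖y t ω - oneVec (blockAvg (y t ω))‖ ^ 2 ∂μ
        + 4 * α ^ 2 * L ^ 2 / (S2 : ℝ) *
            ∑ t ∈ Finset.Icc (r / q * q) r, ∫ ω, ‖blockAvg (y t ω)‖ ^ 2 ∂μ
        + ∫ ω, ‖blockAvg (y (r / q * q) ω) - avgGrad f (x (r / q * q) ω)‖ ^ 2 ∂μ :=
  stmt8_general m d n q S2 hS2 L η α hη0 hη1 f hdiff hlip W hWsymm hW1 hWcontract Ω μ J hJmeas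
    hJunif hJindep x0 x v y hx0 hy0 hxrec hvfull hvest hyrec
end
end
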